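/- Let (X,d) be a separable metric space, μ a finite Borel measure on X, and scl a scaling. Then the μ-essential supremum of the lower local scale of μ is at most the lower quantization scale of μ, and the μ-essential supremum of the upper local scale of μ is at most the upper quantization scale of μ. -/

import Mathlib

open Filter MeasureTheory Metric Set
open scoped ENNReal Topology NNReal

noncomputable section

/-- A *scaling* is a family `(s α)_{α>0}` of positive non-decreasing functions on `(0,1)`
such that for all `α > β > 0` there is `λ₀ > 1` with, for every `λ ∈ (1, λ₀)`,
`s α ε / s β (ε^λ) → 0` and `s α ε / (s β ε)^λ → 0` as `ε → 0⁺`. -/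
def IsScaling (s : ℝ → ℝ → ℝ) : Prop :=
  (∀ α : ℝ, 0 < α → ∀ ε ∈ Set.Ioo (0:ℝ) 1, 0 < s α ε) ∧
  (∀ α : ℝ, 0 < α → MonotoneOn (s α) (Set.Ioo (0:ℝ) 1)) ∧
  (∀ α β : ℝ, 0 < β → β < α → ∃ l₀ > (1:ℝ), ∀ l ∈ Set.Ioo (1:ℝ) l₀,
    Tendsto (fun ε : ℝ => s α ε / s β (ε ^ l)) (𝓝[>] (0:ℝ)) (𝓝 0) ∧
    Tendsto (fun ε : ℝ => s α ε / (s β ε) ^ l) (𝓝[>] (0:ℝ)) (𝓝 0))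

/-- The covering number `N_ε(E)`: minimal cardinality of a finite cover of `E` by balls of
radius `ε` centered in `E` (`+∞` if there is no such finite cover). -/
def coveringNumber {X : Type*} [MetricSpace X] (E : Set X) (ε : ℝ) : ℝ≥0∞ :=
  ⨅ (t : Finset X) (_ : (↑t : Set X) ⊆ E ∧ E ⊆ ⋃ x ∈ t, ball x ε), (t.card : ℝ≥0∞)

/-- Lower box scale of a set. -/
def lowerBoxScale {X : Type*} [MetricSpace X] (s : ℝ → ℝ → ℝ) (E : Set X) : ℝ≥0∞ :=
  ⨆ (α : ℝ) (_ : 0 < α ∧ Tendsto (fun ε : ℝ => coveringNumber E ε * ENNReal.ofReal (s α ε))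
      (𝓝[>] (0:ℝ)) (𝓝 (⊤ : ℝ≥0∞))), ENNReal.ofReal α

/-- Upper box scale of a set. -/
def upperBoxScale {X : Type*} [MetricSpace X] (s : ℝ → ℝ → ℝ) (E : Set X) : ℝ≥0∞ :=
  ⨅ (α : ℝ) (_ : 0 < α ∧ Tendsto (fun ε : ℝ => coveringNumber E ε * ENNReal.ofReal (s α ε))
      (𝓝[>] (0:ℝ)) (𝓝 (0 : ℝ≥0∞))), ENNReal.ofReal α

/-- `H_ε^φ(E)`: Hausdorff pre-measure at scale `ε`, via countable covers by balls of radii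
at most `ε`. -/
def hausdorffPre {X : Type*} [MetricSpace X] (φ : ℝ → ℝ) (E : Set X) (ε : ℝ) : ℝ≥0∞ :=
  ⨅ (c : ℕ → X) (r : ℕ → ℝ) (t : Set ℕ)
    (_ : (∀ n ∈ t, r n ∈ Set.Ioc (0:ℝ) ε) ∧ E ⊆ ⋃ n ∈ t, ball (c n) (r n)),
    ∑' n : t, ENNReal.ofReal (φ (r n))

/-- `H^φ(E) = lim_{ε→0} H_ε^φ(E)`. -/
def hausdorffMeasureOf {X : Type*} [MetricSpace X] (φ : ℝ → ℝ) (E : Set X) : ℝ≥0∞ :=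
  ⨆ (ε : ℝ) (_ : 0 < ε), hausdorffPre φ E ε

/-- Hausdorff scale of a set. -/
def hausdorffScale {X : Type*} [MetricSpace X] (s : ℝ → ℝ → ℝ) (E : Set X) : ℝ≥0∞ :=
  ⨆ (α : ℝ) (_ : 0 < α ∧ hausdorffMeasureOf (s α) E = ⊤), ENNReal.ofReal α

/-- Packing scale of a set, via countable covers and upper box scales. -/
def packingScale {X : Type*} [MetricSpace X] (s : ℝ → ℝ → ℝ) (A : Set X) : ℝ≥0∞ :=
  ⨅ (E : ℕ → Set X) (_ : (⋃ n, E n) = A), ⨆ n, upperBoxScale s (E n)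

/-- Lower local scale of a measure at a point. -/
def lowerLocalScale {X : Type*} [MetricSpace X] [MeasurableSpace X]
    (s : ℝ → ℝ → ℝ) (μ : Measure X) (x : X) : ℝ≥0∞ :=
  ⨆ (α : ℝ) (_ : 0 < α ∧ Tendsto (fun ε : ℝ => μ (ball x ε) / ENNReal.ofReal (s α ε))
      (𝓝[>] (0:ℝ)) (𝓝 (0 : ℝ≥0∞))), ENNReal.ofReal α

/-- Upper local scale of a measure at a point. -/
def upperLocalScale {X : Type*} [MetricSpace X] [MeasurableSpace X]
    (s : ℝ → ℝ → ℝ) (μ : Measure X) (x : X) : ℝ≥0∞ :=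
  ⨅ (α : ℝ) (_ : 0 < α ∧ Tendsto (fun ε : ℝ => μ (ball x ε) / ENNReal.ofReal (s α ε))
      (𝓝[>] (0:ℝ)) (𝓝 (⊤ : ℝ≥0∞))), ENNReal.ofReal α

/-- Scale of a measure: infimum of the scale over Borel sets of positive measure. -/
def measureScale {X : Type*} [MetricSpace X] [MeasurableSpace X]
    (sc : Set X → ℝ≥0∞) (μ : Measure X) : ℝ≥0∞ :=
  ⨅ (E : Set X) (_ : MeasurableSet E ∧ 0 < μ E), sc E

/-- `*`-scale of a measure: infimum of the scale over Borel sets of full measure. -/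
def measureScaleStar {X : Type*} [MetricSpace X] [MeasurableSpace X]
    (sc : Set X → ℝ≥0∞) (μ : Measure X) : ℝ≥0∞ :=
  ⨅ (E : Set X) (_ : MeasurableSet E ∧ μ Eᶜ = 0), sc E

/-- Quantization number `Q_μ(ε)`. -/
def quantizationNumber {X : Type*} [MetricSpace X] [MeasurableSpace X]
    (μ : Measure X) (ε : ℝ) : ℝ≥0∞ :=
  ⨅ (t : Finset X) (_ : ∫⁻ x, (⨅ c ∈ t, edist x c) ∂μ ≤ ENNReal.ofReal ε), (t.card : ℝ≥0∞)

/-- Lower quantization scale of a measure. -/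
def lowerQuantScale {X : Type*} [MetricSpace X] [MeasurableSpace X]
    (s : ℝ → ℝ → ℝ) (μ : Measure X) : ℝ≥0∞ :=
  ⨆ (α : ℝ) (_ : 0 < α ∧ Tendsto (fun ε : ℝ => quantizationNumber μ ε * ENNReal.ofReal (s α ε))
      (𝓝[>] (0:ℝ)) (𝓝 (⊤ : ℝ≥0∞))), ENNReal.ofReal α

/-- Upper quantization scale of a measure. -/
def upperQuantScale {X : Type*} [MetricSpace X] [MeasurableSpace X]
    (s : ℝ → ℝ → ℝ) (μ : Measure X) : ℝ≥0∞ :=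
  ⨅ (α : ℝ) (_ : 0 < α ∧ Tendsto (fun ε : ℝ => quantizationNumber μ ε * ENNReal.ofReal (s α ε))
      (𝓝[>] (0:ℝ)) (𝓝 (0 : ℝ≥0∞))), ENNReal.ofReal α

/-- Packing number `Ñ_ε(E)`: maximal cardinality of an `ε`-separated subset of `E`. -/
def packingNumber {X : Type*} [MetricSpace X] (E : Set X) (ε : ℝ) : ℝ≥0∞ :=
  ⨆ (t : Finset X) (_ : (↑t : Set X) ⊆ E ∧ ∀ x ∈ t, ∀ y ∈ t, x ≠ y → ε ≤ dist x y),
    (t.card : ℝ≥0∞)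

/-- `P_ε^φ(E)`: supremum of `Σ φ(r_i)` over `ε`-packs of `E` (pairwise disjoint balls of `E`,
centered in `E`, with radii at most `ε`). -/
def packingPre {X : Type*} [MetricSpace X] (φ : ℝ → ℝ) (E : Set X) (ε : ℝ) : ℝ≥0∞ :=
  ⨆ (t : Finset (X × ℝ)) (_ : (∀ p ∈ t, p.1 ∈ E ∧ p.2 ∈ Set.Ioc (0:ℝ) ε) ∧
      (↑t : Set (X × ℝ)).Pairwise fun p q => Disjoint (ball p.1 p.2 ∩ E) (ball q.1 q.2 ∩ E)),
    ∑ p ∈ t, ENNReal.ofReal (φ p.2)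

/-- The packing pre-measure `P_0^φ(E) = lim_{ε→0} P_ε^φ(E)`. -/
def packingPre0 {X : Type*} [MetricSpace X] (φ : ℝ → ℝ) (E : Set X) : ℝ≥0∞ :=
  ⨅ (ε : ℝ) (_ : 0 < ε), packingPre φ E ε

/-- The packing `φ`-measure `P^φ(E)`. -/
def packingMeasureOf {X : Type*} [MetricSpace X] (φ : ℝ → ℝ) (E : Set X) : ℝ≥0∞ :=
  ⨅ (F : ℕ → Set X) (_ : (⋃ n, F n) = E), ∑' n, packingPre0 φ (F n)

/-!
Lower scales. If the lower local scale exceeds `a` on a set of positive measure, then on a set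
`F` with `μ F > 0` one has `μ (ball x ε) ≤ s a ε` for all small `ε`. By Markov's inequality a
quantizer of error `ε` leaves half of `F` within `r = ε / (μ F / 2)` of its points, and each of
its points carries at most `s a (2 r)` of `F`; hence `Q_μ(ε) ≥ μ F / (2 s a (2 r))`, and a scaling
absorbs the constant in `2 r`.

Upper scales. If `Q_μ(ε) s α (ε)` is bounded, take quantizers of errors `(4 r_k) ^ κ` along the
radii `r_k = ρ 2⁻ᵏ`: by Borel–Cantelli almost every point is eventually within `r_k` of the
`k`-th quantizer, and the sets of such points have covering numbers `N_ε ≤ 2 / s α' ε`. By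
Vitali's covering lemma the points with `μ (ball x ε) ≤ M s q ε` for arbitrarily small `ε`
have measure at most `M` times a packing pre-measure for `s q`, which vanishes on such sets
when `α' < q`.
-/

theorem tendsto_const_mul_nhdsGT_zero {c : ℝ} (hc : 0 < c) :
    Tendsto (fun ε : ℝ => c * ε) (𝓝[>] 0) (𝓝[>] 0) := by
  simpa using TendstoNhdsWithinIoi.const_mul hc (tendsto_id (x := 𝓝[>] (0:ℝ)))

theorem tendsto_rpow_nhdsGT_zero {κ : ℝ} (hκ : 0 < κ) :
    Tendsto (fun r : ℝ => r ^ κ) (𝓝[>] 0) (𝓝[>] 0) := by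
  refine tendsto_nhdsWithin_of_tendsto_nhds_of_eventually_within _ ?_
    (eventually_nhdsWithin_of_forall fun r (hr : 0 < r) => Real.rpow_pos_of_pos hr κ)
  simpa [Real.zero_rpow hκ.ne'] using
    (Real.continuousAt_rpow_const 0 κ (Or.inr hκ.le)).tendsto.mono_left nhdsWithin_le_nhds

theorem exists_measure_setOf_forall_Ioc_ne_zero {Ω : Type*} [MeasurableSpace Ω] {μ : Measure Ω}
    {P : Ω → ℝ → Prop} (h : μ {x | ∀ᶠ ε in 𝓝[>] (0:ℝ), P x ε} ≠ 0) :
    ∃ ε₀ > 0, μ {x | ∀ ε ∈ Ioc 0 ε₀, P x ε} ≠ 0 := by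
  by_contra! H
  refine h (measure_mono_null (fun x hx => ?_)
    (measure_iUnion_null fun n : ℕ => H (1 / (n + 1)) Nat.one_div_pos_of_nat))
  obtain ⟨ε₀, hε₀, hsub⟩ := mem_nhdsGT_iff_exists_Ioc_subset.1 hx
  obtain ⟨n, hn⟩ := exists_nat_one_div_lt (mem_Ioi.1 hε₀)
  exact mem_iUnion.2 ⟨n, fun ε hε => hsub ⟨hε.1, hε.2.trans hn.le⟩⟩

/-- Dyadic layer-cake bound: `h ≤ g ^ l` is dominated by `(2⁻¹ ^ l) ^ j` on the level
`2⁻¹ ^ (j + 1) < g ≤ 2⁻¹ ^ j` of `g`. -/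
theorem ofReal_le_tsum_levels {g h l : ℝ} (hl : 0 ≤ l) {N : ℕ} (hg₀ : 0 < g)
    (hgN : g ≤ 2⁻¹ ^ N) (hh : h ≤ g ^ l) :
    ENNReal.ofReal h ≤ ∑' i, if (2⁻¹ : ℝ) ^ (i + N + 1) < g
      then ENNReal.ofReal ((2⁻¹ : ℝ) ^ l) ^ (i + N) else 0 := by
  obtain ⟨j, hj, hgj⟩ := exists_nat_pow_near_of_lt_one hg₀ (hgN.trans (pow_le_one₀ (by norm_num)
    (by norm_num))) (by norm_num : (0:ℝ) < 2⁻¹) (by norm_num)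
  have hNj : N ≤ j := by
    by_contra! hjN
    have := pow_le_pow_of_le_one (by norm_num : (0:ℝ) ≤ 2⁻¹) (by norm_num)
      (show j + 1 ≤ N by omega)
    linarith
  refine le_trans ?_ (ENNReal.le_tsum (j - N))
  rw [Nat.sub_add_cancel hNj, if_pos hj, ← ENNReal.ofReal_pow (by positivity),
    Real.rpow_pow_comm (by norm_num)]
  exact ENNReal.ofReal_le_ofReal (hh.trans (Real.rpow_le_rpow hg₀.le hgj hl))

theorem tsum_ofReal_rpow_div_ne_top {a b κ : ℝ} (ha : 0 < a) (hb : 0 < b) (hκ : 1 < κ) :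
    ∑' k : ℕ, ENNReal.ofReal ((a * 2⁻¹ ^ k) ^ κ / (b * 2⁻¹ ^ k)) ≠ ⊤ := by
  have hgeom : (2⁻¹ : ℝ) ^ (κ - 1) < 1 := Real.rpow_lt_one (by norm_num) (by norm_num) (by linarith)
  have heq : ∀ k : ℕ,
      (a * 2⁻¹ ^ k) ^ κ / (b * 2⁻¹ ^ k) = a ^ κ / b * ((2⁻¹ : ℝ) ^ (κ - 1)) ^ k := by
    intro k
    have hx : (0 : ℝ) < 2⁻¹ ^ k := by positivity
    rw [Real.mul_rpow ha.le hx.le, Real.rpow_pow_comm (by norm_num) (κ - 1) k,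
      Real.rpow_sub_one hx.ne']
    field_simp
  simp_rw [heq]
  rw [← ENNReal.ofReal_tsum_of_nonneg (fun k => by positivity)
    ((summable_geometric_of_lt_one (by positivity) hgeom).mul_left _)]
  exact ENNReal.ofReal_ne_top

namespace IsScaling

variable {s : ℝ → ℝ → ℝ}

theorem pos (hs : IsScaling s) {α ε : ℝ} (hα : 0 < α) (hε₀ : 0 < ε) (hε₁ : ε < 1) :
    0 < s α ε :=
  hs.1 α hα ε ⟨hε₀, hε₁⟩

theorem mono (hs : IsScaling s) {α x y : ℝ} (hα : 0 < α) (hx : 0 < x) (hxy : x ≤ y)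
    (hy : y < 1) : s α x ≤ s α y :=
  hs.2.1 α hα ⟨hx, hxy.trans_lt hy⟩ ⟨hx.trans_le hxy, hy⟩ hxy

theorem exists_one_lt_tendsto (hs : IsScaling s) {α β : ℝ} (hβ : 0 < β) (hβα : β < α) :
    ∃ κ : ℝ, 1 < κ ∧ Tendsto (fun ε : ℝ => s α ε / s β (ε ^ κ)) (𝓝[>] 0) (𝓝 0) ∧
      Tendsto (fun ε : ℝ => s α ε / s β ε ^ κ) (𝓝[>] 0) (𝓝 0) := by
  obtain ⟨l₀, hl₀, H⟩ := hs.2.2 α β hβ hβα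
  exact ⟨(1 + l₀) / 2, by linarith, H _ ⟨by linarith, by linarith⟩⟩

theorem exists_eventually_le_comp_rpow (hs : IsScaling s) {α β : ℝ} (hβ : 0 < β) (hβα : β < α) :
    ∃ κ : ℝ, 1 < κ ∧ ∀ᶠ ε in 𝓝[>] (0:ℝ), s α ε ≤ s β (ε ^ κ) := by
  obtain ⟨κ, hκ, H, -⟩ := hs.exists_one_lt_tendsto hβ hβα
  refine ⟨κ, hκ, ?_⟩
  filter_upwards [H.eventually_lt_const one_pos, Ioo_mem_nhdsGT one_pos] with ε hlt ⟨hε₀, hε₁⟩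
  have hpos := hs.pos hβ (Real.rpow_pos_of_pos hε₀ κ) (Real.rpow_lt_one hε₀.le hε₁ (by linarith))
  exact ((div_lt_one hpos).1 hlt).le

theorem exists_eventually_le_rpow (hs : IsScaling s) {α β : ℝ} (hβ : 0 < β) (hβα : β < α) :
    ∃ l : ℝ, 1 < l ∧ ∀ᶠ ε in 𝓝[>] (0:ℝ), s α ε ≤ s β ε ^ l := by
  obtain ⟨l, hl, -, H⟩ := hs.exists_one_lt_tendsto hβ hβα
  refine ⟨l, hl, ?_⟩
  filter_upwards [H.eventually_lt_const one_pos, Ioo_mem_nhdsGT one_pos] with ε hlt ⟨hε₀, hε₁⟩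
  exact ((div_lt_one (Real.rpow_pos_of_pos (hs.pos hβ hε₀ hε₁) l)).1 hlt).le

theorem eventually_le_comp_mul (hs : IsScaling s) {α β : ℝ} (hβ : 0 < β) (hβα : β < α)
    {a b : ℝ} (ha : 0 < a) (hb : 0 < b) :
    ∀ᶠ ε in 𝓝[>] (0:ℝ), s α (a * ε) ≤ s β (b * ε) := by
  obtain ⟨κ, hκ, H⟩ := hs.exists_eventually_le_comp_rpow hβ hβα
  have hsmall : Tendsto (fun ε : ℝ => a ^ κ * ε ^ (κ - 1)) (𝓝[>] 0) (𝓝 0) := by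
    simpa using ((tendsto_rpow_nhdsGT_zero (sub_pos.2 hκ)).mono_right nhdsWithin_le_nhds).const_mul
      (a ^ κ)
  filter_upwards [(tendsto_const_mul_nhdsGT_zero ha).eventually H,
    (tendsto_const_mul_nhdsGT_zero hb).eventually (Ioo_mem_nhdsGT one_pos),
    hsmall.eventually_lt_const hb, self_mem_nhdsWithin] with ε hε hbε hlt (hε₀ : 0 < ε)
  refine hε.trans (hs.mono hβ (Real.rpow_pos_of_pos (by positivity) κ) ?_ hbε.2)
  calc (a * ε) ^ κ = a ^ κ * ε ^ (κ - 1) * ε := by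
        rw [Real.mul_rpow ha.le hε₀.le, mul_assoc, ← Real.rpow_add_one hε₀.ne', sub_add_cancel]
    _ ≤ b * ε := by gcongr

theorem eventually_le (hs : IsScaling s) {α β : ℝ} (hβ : 0 < β) (hβα : β < α) :
    ∀ᶠ ε in 𝓝[>] (0:ℝ), s α ε ≤ s β ε := by
  simpa using hs.eventually_le_comp_mul hβ hβα one_pos one_pos

theorem tendsto_div_zero (hs : IsScaling s) {α β : ℝ} (hβ : 0 < β) (hβα : β < α) :
    Tendsto (fun ε => s α ε / s β ε) (𝓝[>] (0:ℝ)) (𝓝 0) := by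
  obtain ⟨κ, hκ, H, -⟩ := hs.exists_one_lt_tendsto hβ hβα
  refine squeeze_zero' ?_ ?_ H
  all_goals filter_upwards [Ioo_mem_nhdsGT one_pos] with ε ⟨hε₀, hε₁⟩
  · exact div_nonneg (hs.pos (hβ.trans hβα) hε₀ hε₁).le (hs.pos hβ hε₀ hε₁).le
  · have hpow₀ : 0 < ε ^ κ := Real.rpow_pos_of_pos hε₀ κ
    have hpow : ε ^ κ ≤ ε := by
      simpa using Real.rpow_le_rpow_of_exponent_ge hε₀ hε₁.le hκ.le
    exact div_le_div_of_nonneg_left (hs.pos (hβ.trans hβα) hε₀ hε₁).le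
      (hs.pos hβ hpow₀ (hpow.trans_lt hε₁)) (hs.mono hβ hpow₀ hpow hε₁)

theorem tendsto_div_atTop (hs : IsScaling s) {α β : ℝ} (hβ : 0 < β) (hβα : β < α) :
    Tendsto (fun ε => s β ε / s α ε) (𝓝[>] (0:ℝ)) atTop := by
  have h := tendsto_nhdsWithin_of_tendsto_nhds_of_eventually_within _ (hs.tendsto_div_zero hβ hβα)
    (by filter_upwards [Ioo_mem_nhdsGT one_pos] with ε ⟨hε₀, hε₁⟩
        exact div_pos (hs.pos (hβ.trans hβα) hε₀ hε₁) (hs.pos hβ hε₀ hε₁))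
  exact h.inv_tendsto_nhdsGT_zero.congr fun ε => by simp [inv_div]

theorem tendsto_zero (hs : IsScaling s) {α : ℝ} (hα : 0 < α) :
    Tendsto (s α) (𝓝[>] (0:ℝ)) (𝓝 0) := by
  have hα₂ : 0 < α / 2 := by linarith
  refine squeeze_zero' ?_ ?_ (by
    simpa using (hs.tendsto_div_zero hα₂ (by linarith : α / 2 < α)).mul_const (s (α / 2) 2⁻¹))
  all_goals filter_upwards [Ioo_mem_nhdsGT (by norm_num : (0:ℝ) < 2⁻¹)] with ε ⟨hε₀, hε₁⟩
  · exact (hs.pos hα hε₀ (hε₁.trans (by norm_num))).le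
  · have hpos := hs.pos hα₂ hε₀ (hε₁.trans (by norm_num))
    rw [div_mul_eq_mul_div, le_div_iff₀ hpos]
    exact mul_le_mul_of_nonneg_left (hs.mono hα₂ hε₀ hε₁.le (by norm_num))
      (hs.pos hα hε₀ (hε₁.trans (by norm_num))).le

end IsScaling

section Packing

variable {X : Type*} [MetricSpace X]

theorem coveringNumber_antitone (E : Set X) : Antitone (coveringNumber E) := fun _ _ h =>
  le_iInf₂ fun t ht => iInf₂_le t ⟨ht.1, ht.2.trans (iUnion₂_mono fun _ _ => ball_subset_ball h)⟩

theorem coveringNumber_two_mul_le_card {E : Set X} {t : Finset X} {r : ℝ}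
    (h : ∀ x ∈ E, infEDist x t < ENNReal.ofReal r) : coveringNumber E (2 * r) ≤ t.card := by
  classical
  have hpick : ∀ c, ∃ y, (ball c r ∩ E).Nonempty → y ∈ ball c r ∩ E := fun c =>
    if hc : (ball c r ∩ E).Nonempty then ⟨hc.some, fun _ => hc.some_mem⟩ else ⟨c, hc.elim⟩
  choose pick hpick using hpick
  refine iInf₂_le_of_le ((t.filter fun c => (ball c r ∩ E).Nonempty).image pick) ⟨?_, ?_⟩ ?_
  · simp only [Finset.coe_image, Finset.coe_filter, image_subset_iff]
    exact fun c hc => (hpick c hc.2).2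
  · intro x hx
    obtain ⟨c, hc, hxc⟩ := infEDist_lt_iff.1 (h x hx)
    have hxc : x ∈ ball c r := edist_lt_ofReal.1 hxc
    have hne : (ball c r ∩ E).Nonempty := ⟨x, hxc, hx⟩
    refine mem_biUnion (Finset.mem_image_of_mem pick (Finset.mem_filter.2 ⟨hc, hne⟩)) ?_
    have := dist_triangle_right x (pick c) c
    rw [mem_ball] at hxc ⊢
    linarith [mem_ball.1 (hpick c hne).1]
  · exact_mod_cast Finset.card_image_le.trans (Finset.card_filter_le _ _)

theorem packingNumber_le_coveringNumber (E : Set X) (r : ℝ) :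
    packingNumber E r ≤ coveringNumber E (r / 2) := by
  classical
  refine iSup₂_le fun u ⟨huE, hsep⟩ => le_iInf₂ fun T ⟨_, hT⟩ => ?_
  have hcenter : ∀ x, ∃ c, x ∈ u → c ∈ T ∧ x ∈ ball c (r / 2) := fun x =>
    if hx : x ∈ u then
      (mem_iUnion₂.1 (hT (huE hx))).elim fun c hc => ⟨c, fun _ => ⟨hc.1, hc.2⟩⟩
    else ⟨x, fun h => (hx h).elim⟩
  choose f hf using hcenter
  refine Nat.cast_le.2 (Finset.card_le_card_of_injOn f (fun x hx => (hf x hx).1) ?_)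
  intro x hx y hy hxy
  by_contra hne
  have := dist_triangle_right x y (f x)
  have hy' := mem_ball.1 (hf y hy).2
  rw [← hxy] at hy'
  linarith [hsep x hx y hy hne, mem_ball.1 (hf x hx).2]

def IsPack (E : Set X) (δ : ℝ) (t : Finset (X × ℝ)) : Prop :=
  (∀ p ∈ t, p.1 ∈ E ∧ p.2 ∈ Ioc 0 δ) ∧
    (↑t : Set (X × ℝ)).Pairwise fun p q => Disjoint (ball p.1 p.2 ∩ E) (ball q.1 q.2 ∩ E)

theorem packingPre_eq_iSup (φ : ℝ → ℝ) (E : Set X) (δ : ℝ) :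
    packingPre φ E δ = ⨆ (t) (_ : IsPack E δ t), ∑ p ∈ t, ENNReal.ofReal (φ p.2) :=
  rfl

namespace IsPack

variable {E : Set X} {δ : ℝ} {t : Finset (X × ℝ)}

theorem le_dist (ht : IsPack E δ t) {p q : X × ℝ} (hp : p ∈ t) (hq : q ∈ t) (hpq : p ≠ q) :
    p.2 ≤ dist q.1 p.1 := by
  by_contra! h
  exact Set.disjoint_left.1 (ht.2 hp hq hpq) ⟨mem_ball.2 h, (ht.1 q hq).1⟩
    ⟨mem_ball_self (ht.1 q hq).2.1, (ht.1 q hq).1⟩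

theorem injOn_fst (ht : IsPack E δ t) : InjOn Prod.fst (t : Set (X × ℝ)) := by
  intro p hp q hq hpq
  by_contra hne
  have := ht.le_dist hp hq hne
  rw [hpq, dist_self] at this
  exact this.not_gt (ht.1 p hp).2.1

theorem card_filter_mul_le (ht : IsPack E δ t) {g : ℝ → ℝ} {C : ℝ≥0∞}
    (hcov : ∀ r ∈ Ioc 0 δ, coveringNumber E (r / 2) * ENNReal.ofReal (g r) ≤ C) (y : ℝ) :
    (t.filter fun p => y < g p.2).card * ENNReal.ofReal y ≤ C := by
  classical
  set S := t.filter fun p => y < g p.2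
  rcases S.eq_empty_or_nonempty with hS | hS
  · simp [hS]
  obtain ⟨p₀, hp₀, hmin⟩ := S.exists_min_image Prod.snd hS
  have hSt : S ⊆ t := Finset.filter_subset _ _
  have hsep : ∀ x ∈ S.image Prod.fst, ∀ z ∈ S.image Prod.fst, x ≠ z → p₀.2 ≤ dist x z := by
    simp only [Finset.mem_image]
    rintro _ ⟨p, hp, rfl⟩ _ ⟨q, hq, rfl⟩ hne
    exact (hmin q hq).trans (ht.le_dist (hSt hq) (hSt hp) fun h => hne (h ▸ rfl))
  have hcard : (S.card : ℝ≥0∞) ≤ coveringNumber E (p₀.2 / 2) := by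
    rw [← Finset.card_image_of_injOn (ht.injOn_fst.mono (Finset.coe_subset.2 hSt))]
    refine le_trans ?_ (packingNumber_le_coveringNumber E p₀.2)
    refine le_iSup₂ (f := fun (u : Finset X) _ => (u.card : ℝ≥0∞)) (S.image Prod.fst) ⟨?_, hsep⟩
    simp only [Finset.coe_image, image_subset_iff]
    exact fun p hp => (ht.1 p (hSt hp)).1
  calc (S.card : ℝ≥0∞) * ENNReal.ofReal y
      ≤ coveringNumber E (p₀.2 / 2) * ENNReal.ofReal (g p₀.2) :=
        mul_le_mul' hcard (ENNReal.ofReal_le_ofReal (Finset.mem_filter.1 hp₀).2.le)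
    _ ≤ C := hcov _ (ht.1 p₀ (hSt hp₀)).2

theorem sum_ofReal_le (ht : IsPack E δ t) {g h : ℝ → ℝ} {l : ℝ} (hl : 0 ≤ l) {N : ℕ}
    {C : ℝ≥0∞} (hcov : ∀ r ∈ Ioc 0 δ, coveringNumber E (r / 2) * ENNReal.ofReal (g r) ≤ C)
    (hg : ∀ r ∈ Ioc 0 δ, 0 < g r ∧ g r ≤ 2⁻¹ ^ N) (hh : ∀ r ∈ Ioc 0 δ, h r ≤ g r ^ l) :
    ∑ p ∈ t, ENNReal.ofReal (h p.2) ≤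
      ∑' i, 2 * C * (2 * ENNReal.ofReal ((2⁻¹ : ℝ) ^ l)) ^ (i + N) := by
  classical
  set Ω := ENNReal.ofReal ((2⁻¹ : ℝ) ^ l)
  have hlevel : ∀ n : ℕ, ((t.filter fun p => (2⁻¹ : ℝ) ^ (n + 1) < g p.2).card : ℝ≥0∞) * Ω ^ n
      ≤ 2 * C * (2 * Ω) ^ n := by
    intro n
    have hcard := ht.card_filter_mul_le hcov ((2⁻¹ : ℝ) ^ (n + 1))
    rw [ENNReal.ofReal_pow (by norm_num), ENNReal.ofReal_inv_of_pos two_pos,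
      ENNReal.ofReal_ofNat] at hcard
    have h2 : (2⁻¹ : ℝ≥0∞) ^ (n + 1) * 2 ^ (n + 1) = 1 := by
      rw [← mul_pow, ENNReal.inv_mul_cancel two_ne_zero ENNReal.ofNat_ne_top, one_pow]
    calc _ = (_ * (2⁻¹ : ℝ≥0∞) ^ (n + 1)) * (2 * (2 * Ω) ^ n) := by
          rw [← mul_one (_ * Ω ^ n), ← h2]; ring
      _ ≤ C * (2 * (2 * Ω) ^ n) := by gcongr
      _ = 2 * C * (2 * Ω) ^ n := by ring
  calc ∑ p ∈ t, ENNReal.ofReal (h p.2)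
      ≤ ∑ p ∈ t, ∑' i, if (2⁻¹ : ℝ) ^ (i + N + 1) < g p.2 then Ω ^ (i + N) else 0 :=
        Finset.sum_le_sum fun p hp => ofReal_le_tsum_levels hl (hg _ (ht.1 p hp).2).1
          (hg _ (ht.1 p hp).2).2 (hh _ (ht.1 p hp).2)
    _ = ∑' i, ∑ p ∈ t, if (2⁻¹ : ℝ) ^ (i + N + 1) < g p.2 then Ω ^ (i + N) else 0 :=
        (Summable.tsum_finsetSum fun _ _ => ENNReal.summable).symm
    _ ≤ ∑' i, 2 * C * (2 * Ω) ^ (i + N) := by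
        refine ENNReal.tsum_le_tsum fun i => ?_
        rw [← Finset.sum_filter, Finset.sum_const, nsmul_eq_mul]
        exact hlevel (i + N)

end IsPack

end Packing

section Quantization

variable {X : Type*} [MetricSpace X] [MeasurableSpace X] {μ : Measure X}

theorem measure_le_card_mul_add (t : Finset X) {F : Set X} {r : ℝ} {b : ℝ≥0∞}
    (hF : ∀ x ∈ F, μ (ball x (2 * r)) ≤ b) :
    μ F ≤ t.card * b + μ {x | ENNReal.ofReal r ≤ infEDist x t} := by
  have hcover : F ⊆ (⋃ c ∈ t, ball c r ∩ F) ∪ {x | ENNReal.ofReal r ≤ infEDist x t} := by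
    intro x hx
    rcases lt_or_ge (infEDist x t) (ENNReal.ofReal r) with h | h
    · obtain ⟨c, hc, hxc⟩ := infEDist_lt_iff.1 h
      exact Or.inl (mem_biUnion hc ⟨edist_lt_ofReal.1 hxc, hx⟩)
    · exact Or.inr h
  have hball : ∀ c ∈ t, μ (ball c r ∩ F) ≤ b := by
    intro c _
    rcases (ball c r ∩ F).eq_empty_or_nonempty with h | ⟨y, hyc, hyF⟩
    · simp [h]
    refine (measure_mono fun z hz => ?_).trans (hF y hyF)
    have := dist_triangle_right z y c
    rw [mem_ball] at hyc ⊢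
    linarith [mem_ball.1 hz.1]
  calc μ F ≤ μ (⋃ c ∈ t, ball c r ∩ F) + μ {x | ENNReal.ofReal r ≤ infEDist x t} :=
        (measure_mono hcover).trans (measure_union_le _ _)
    _ ≤ ∑ c ∈ t, μ (ball c r ∩ F) + μ {x | ENNReal.ofReal r ≤ infEDist x t} := by
        gcongr; exact measure_biUnion_finset_le _ _
    _ ≤ t.card * b + μ {x | ENNReal.ofReal r ≤ infEDist x t} := by
        gcongr; simpa using Finset.sum_le_sum hball

theorem exists_lintegral_le_card_mul_le_two {ε : ℝ} {b : ℝ≥0∞} (hb₀ : b ≠ 0) (hb : b ≤ 1)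
    (hQ : quantizationNumber μ ε * b ≤ 1) :
    ∃ t : Finset X, ∫⁻ x, ⨅ c ∈ t, edist x c ∂μ ≤ ENNReal.ofReal ε ∧ t.card * b ≤ 2 := by
  have hQ' : quantizationNumber μ ε ≠ ⊤ := fun h => by
    rw [h, ENNReal.top_mul hb₀] at hQ
    simp at hQ
  obtain ⟨t, ht⟩ := iInf_lt_iff.1 (ENNReal.lt_add_right hQ' one_ne_zero)
  obtain ⟨hε, hcard⟩ := iInf_lt_iff.1 ht
  refine ⟨t, hε, ?_⟩
  calc t.card * b ≤ (quantizationNumber μ ε + 1) * b := by gcongr; exact hcard.le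
    _ ≤ 1 + 1 := by
        rw [add_mul, one_mul]
        exact add_le_add hQ hb
    _ = 2 := one_add_one_eq_two

variable [BorelSpace X]

theorem measure_le_infEDist_le {t : Finset X} {ε r : ℝ} (hr : 0 < r)
    (ht : ∫⁻ x, ⨅ c ∈ t, edist x c ∂μ ≤ ENNReal.ofReal ε) :
    μ {x | ENNReal.ofReal r ≤ infEDist x t} ≤ ENNReal.ofReal (ε / r) := by
  rw [ENNReal.ofReal_div_of_pos hr, ENNReal.le_div_iff_mul_le (Or.inl (by simpa using hr))
    (Or.inl ENNReal.ofReal_ne_top), mul_comm]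
  exact (mul_meas_ge_le_lintegral₀ measurable_infEDist.aemeasurable _).trans ht

theorem div_le_quantizationNumber {F : Set X} {r ε : ℝ} {b : ℝ≥0∞} (hr : 0 < r) (hb₀ : b ≠ 0)
    (hb : b ≠ ⊤) (hμF : μ F ≠ ⊤) (hF : ∀ x ∈ F, μ (ball x (2 * r)) ≤ b)
    (hεr : ENNReal.ofReal (ε / r) ≤ μ F / 2) :
    μ F / 2 / b ≤ quantizationNumber μ ε := by
  refine le_iInf₂ fun t ht => (ENNReal.div_le_iff hb₀ hb).2 ?_
  have h := (measure_le_card_mul_add t hF).trans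
    (add_le_add_right ((measure_le_infEDist_le hr ht).trans hεr) _)
  rwa [← tsub_le_iff_right, ENNReal.sub_half hμF] at h

end Quantization

section Vitali

variable {X : Type*} [MetricSpace X] [TopologicalSpace.SeparableSpace X] [MeasurableSpace X]

theorem measure_inter_le_mul_packingPre (μ : Measure X) (E : Set X) (φ : ℝ → ℝ) (M : ℝ≥0∞)
    {δ : ℝ} (hδ : 0 < δ) :
    μ (E ∩ {x | ∃ᶠ ε in 𝓝[>] 0, μ (ball x ε) ≤ M * ENNReal.ofReal (φ ε)}) ≤
      M * packingPre (fun r => φ (5 * r)) E δ := by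
  set F := E ∩ {x | ∃ᶠ ε in 𝓝[>] 0, μ (ball x ε) ≤ M * ENNReal.ofReal (φ ε)}
  have hrad : ∀ x, ∃ ρ, ρ ∈ Ioc 0 δ ∧
      (x ∈ F → μ (ball x (5 * ρ)) ≤ M * ENNReal.ofReal (φ (5 * ρ))) := by
    intro x
    by_cases hx : x ∈ F
    · obtain ⟨ε, hε, hεδ⟩ :=
        (hx.2.and_eventually (Ioc_mem_nhdsGT (by positivity : 0 < 5 * δ))).exists
      refine ⟨ε / 5, ⟨by linarith [hεδ.1], by linarith [hεδ.2]⟩, fun _ => ?_⟩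
      rwa [mul_div_cancel₀ ε (by norm_num : (5:ℝ) ≠ 0)]
    · exact ⟨δ, ⟨hδ, le_rfl⟩, fun h => (hx h).elim⟩
  choose ρ hρ hρμ using hrad
  obtain ⟨u, huF, hdisj, hcover⟩ :=
    Vitali.exists_disjoint_subfamily_covering_enlargement_closedBall F id ρ δ
      (fun x _ => (hρ x).2) 4 (by norm_num)
  have hu : u.Countable := (hdisj.mono fun _ => ball_subset_closedBall).countable_of_isOpen
    (fun _ _ => isOpen_ball) fun x _ => nonempty_ball.2 (hρ x).1
  have hpack : ∀ v : Finset u, IsPack E δ (v.map ⟨fun x : u => ((x : X), ρ x),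
      fun _ _ h => Subtype.ext (congrArg Prod.fst h)⟩) := by
    intro v
    refine ⟨?_, ?_⟩
    · simp only [Finset.mem_map]
      rintro _ ⟨x, -, rfl⟩
      exact ⟨(huF x.2).1, hρ x⟩
    · simp only [Finset.coe_map]
      rintro _ ⟨x, -, rfl⟩ _ ⟨y, -, rfl⟩ hxy
      exact (hdisj x.2 y.2 fun h => hxy (by rw [Subtype.ext h])).mono
        (inter_subset_left.trans ball_subset_closedBall)
        (inter_subset_left.trans ball_subset_closedBall)
  calc μ F ≤ μ (⋃ x ∈ u, closedBall x (4 * ρ x)) := measure_mono fun x hx => by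
        obtain ⟨b, hb, hsub⟩ := hcover x hx
        exact mem_biUnion hb (hsub (mem_closedBall_self (hρ x).1.le))
    _ ≤ ∑' x : u, μ (closedBall x (4 * ρ x)) := measure_biUnion_le μ hu _
    _ ≤ ∑' x : u, M * ENNReal.ofReal (φ (5 * ρ x)) := ENNReal.tsum_le_tsum fun x =>
        (measure_mono (closedBall_subset_ball (by linarith [(hρ x).1]))).trans
          (hρμ x (huF x.2))
    _ = M * ⨆ v : Finset u, ∑ x ∈ v, ENNReal.ofReal (φ (5 * ρ x)) := by
        rw [ENNReal.tsum_mul_left, ENNReal.tsum_eq_iSup_sum]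
    _ ≤ M * packingPre (fun r => φ (5 * r)) E δ := by
        gcongr
        rw [packingPre_eq_iSup]
        exact iSup_le fun v => le_iSup₂_of_le _ (hpack v) (by rw [Finset.sum_map]; rfl)

end Vitali

namespace IsScaling

variable {s : ℝ → ℝ → ℝ} {X : Type*} [MetricSpace X]

/-- Group the balls of a pack by the dyadic level of `s β (c r)`, `α < β < q`, count each level
by a covering number, and sum over the levels using `s q ≤ (s β) ^ l` with `l > 1`. -/
theorem packingPre0_eq_zero (hs : IsScaling s) {E : Set X} {α q c : ℝ} {C : ℝ≥0∞}
    (hα : 0 < α) (hαq : α < q) (hc : 0 < c) (hC : C ≠ ⊤)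
    (hE : ∀ᶠ ε in 𝓝[>] 0, coveringNumber E ε * ENNReal.ofReal (s α ε) ≤ C) :
    packingPre0 (fun r => s q (c * r)) E = 0 := by
  obtain ⟨β, hαβ, hβq⟩ := exists_between hαq
  have hβ := hα.trans hαβ
  obtain ⟨l, hl, hql⟩ := hs.exists_eventually_le_rpow hβ hβq
  have hΩ : 2 * ENNReal.ofReal ((2⁻¹ : ℝ) ^ l) < 1 := by
    have := Real.rpow_lt_rpow_of_exponent_gt (by norm_num : (0:ℝ) < 2⁻¹) (by norm_num) hl
    rw [Real.rpow_one] at this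
    rw [← ENNReal.ofReal_ofNat 2, ← ENNReal.ofReal_mul (by norm_num), ENNReal.ofReal_lt_one]
    linarith
  have hsum : ∑' i, 2 * C * (2 * ENNReal.ofReal ((2⁻¹ : ℝ) ^ l)) ^ i ≠ ⊤ := by
    rw [ENNReal.tsum_mul_left, ENNReal.tsum_geometric]
    exact ENNReal.mul_ne_top (ENNReal.mul_ne_top ENNReal.ofNat_ne_top hC)
      (ENNReal.inv_ne_top.2 (tsub_pos_of_lt hΩ).ne')
  refine le_antisymm (ge_of_tendsto' (ENNReal.tendsto_sum_nat_add _ hsum) fun N => ?_) zero_le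
  have hc' := tendsto_const_mul_nhdsGT_zero hc
  have hev : ∀ᶠ r in 𝓝[>] 0,
      coveringNumber E (r / 2) * ENNReal.ofReal (s β (c * r)) ≤ C ∧
        (0 < s β (c * r) ∧ s β (c * r) ≤ 2⁻¹ ^ N) ∧ s q (c * r) ≤ s β (c * r) ^ l := by
    filter_upwards [(tendsto_const_mul_nhdsGT_zero (by norm_num : (0:ℝ) < 2⁻¹)).eventually hE,
      hs.eventually_le_comp_mul hα hαβ hc (by norm_num : (0:ℝ) < 2⁻¹),
      hc'.eventually (Ioo_mem_nhdsGT one_pos),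
      hc'.eventually ((hs.tendsto_zero hβ).eventually_lt_const (by positivity : (0:ℝ) < 2⁻¹ ^ N)),
      hc'.eventually hql] with r hcov hle ⟨h0, h1⟩ hsmall hq
    refine ⟨le_trans ?_ hcov, ⟨hs.pos hβ h0 h1, hsmall.le⟩, hq⟩
    rw [div_eq_inv_mul]
    gcongr
  obtain ⟨δ, hδ, hδsub⟩ := mem_nhdsGT_iff_exists_Ioc_subset.1 hev
  refine iInf₂_le_of_le δ hδ ?_
  rw [packingPre_eq_iSup]
  exact iSup₂_le fun t ht => ht.sum_ofReal_le (by linarith) (fun r hr => (hδsub hr).1)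
    (fun r hr => (hδsub hr).2.1) (fun r hr => (hδsub hr).2.2)

theorem eventually_coveringNumber_mul_le (hs : IsScaling s) {α ρ : ℝ} (hα : 0 < α) (hρ : 0 < ρ)
    {t : ℕ → Finset X} {C : ℝ≥0∞}
    (ht : ∀ k, (t k).card * ENNReal.ofReal (s α (4 * (ρ * 2⁻¹ ^ k))) ≤ C) (K : ℕ) :
    ∀ᶠ ε in 𝓝[>] 0, coveringNumber {x | ∀ k ≥ K, infEDist x (t k : Set X) <
      ENNReal.ofReal (ρ * 2⁻¹ ^ k)} ε * ENNReal.ofReal (s α ε) ≤ C := by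
  filter_upwards [Ioo_mem_nhdsGT (by positivity : 0 < min (2 * (ρ * 2⁻¹ ^ K)) 2⁻¹)]
    with ε ⟨hε₀, hεK⟩
  have hεK' := hεK.trans_le (min_le_left _ _)
  have hK1 : (2⁻¹ : ℝ) ^ K ≤ 1 := pow_le_one₀ (by norm_num) (by norm_num)
  obtain ⟨n, hn, hn'⟩ := exists_nat_pow_near_of_lt_one (x := ε / (2 * ρ)) (by positivity)
    (by rw [div_le_one (by positivity)]; nlinarith) (by norm_num : (0:ℝ) < 2⁻¹) (by norm_num)
  rw [lt_div_iff₀ (by positivity)] at hn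
  rw [div_le_iff₀ (by positivity)] at hn'
  have h2r : 2 * (ρ * 2⁻¹ ^ (n + 1)) = 2⁻¹ ^ (n + 1) * (2 * ρ) := by ring
  have h4r : 4 * (ρ * 2⁻¹ ^ (n + 1)) = 2⁻¹ ^ n * (2 * ρ) := by ring
  have hKn : K ≤ n + 1 := by
    by_contra! h
    have := pow_le_pow_of_le_one (by norm_num : (0:ℝ) ≤ 2⁻¹) (by norm_num) h.le
    nlinarith
  calc coveringNumber {x | ∀ k ≥ K, infEDist x (t k : Set X) <
          ENNReal.ofReal (ρ * 2⁻¹ ^ k)} ε * ENNReal.ofReal (s α ε)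
      ≤ (t (n + 1)).card * ENNReal.ofReal (s α (4 * (ρ * 2⁻¹ ^ (n + 1)))) := by
        gcongr ?_ * ENNReal.ofReal ?_
        · refine (coveringNumber_antitone _ (by linarith)).trans
            (coveringNumber_two_mul_le_card fun x hx => hx (n + 1) hKn)
        · exact hs.mono hα hε₀ (by linarith) (by linarith [min_le_right (2 * (ρ * 2⁻¹ ^ K)) 2⁻¹])
    _ ≤ C := ht (n + 1)

section Measure

variable [MeasurableSpace X] {μ : Measure X}

theorem tendsto_measure_ball_div_of_lt_lowerLocalScale (hs : IsScaling s) {x : X} {q : ℝ}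
    (hq : 0 < q) (h : ENNReal.ofReal q < lowerLocalScale s μ x) :
    Tendsto (fun ε => μ (ball x ε) / ENNReal.ofReal (s q ε)) (𝓝[>] 0) (𝓝 0) := by
  obtain ⟨α, hα⟩ := lt_iSup_iff.1 h
  obtain ⟨⟨-, hα₀⟩, hqα⟩ := lt_iSup_iff.1 hα
  refine tendsto_of_tendsto_of_tendsto_of_le_of_le' tendsto_const_nhds hα₀
    (Eventually.of_forall fun _ => zero_le) ?_
  filter_upwards [hs.eventually_le hq ((ENNReal.ofReal_lt_ofReal_iff'.1 hqα).1)] with ε hε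
  exact ENNReal.div_le_div_left (ENNReal.ofReal_le_ofReal hε) _

theorem measure_inter_frequently_le_eq_zero [TopologicalSpace.SeparableSpace X]
    (hs : IsScaling s) (μ : Measure X) {E : Set X} {α q : ℝ} {C : ℝ≥0∞} (hα : 0 < α)
    (hαq : α < q) (hC : C ≠ ⊤)
    (hE : ∀ᶠ ε in 𝓝[>] 0, coveringNumber E ε * ENNReal.ofReal (s α ε) ≤ C) {M : ℝ≥0∞}
    (hM : M ≠ ⊤) :
    μ (E ∩ {x | ∃ᶠ ε in 𝓝[>] 0, μ (ball x ε) ≤ M * ENNReal.ofReal (s q ε)}) = 0 := by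
  rcases eq_or_ne M 0 with rfl | hM₀
  · simpa using measure_inter_le_mul_packingPre μ E (s q) 0 one_pos
  refine le_zero_iff.1 ?_
  calc _ ≤ ⨅ (δ : ℝ) (_ : 0 < δ), M * packingPre (fun r => s q (5 * r)) E δ :=
        le_iInf₂ fun δ hδ => measure_inter_le_mul_packingPre μ E (s q) M hδ
    _ = M * packingPre0 (fun r => s q (5 * r)) E := by
        simp_rw [packingPre0, ENNReal.mul_iInf_of_ne hM₀ hM]
    _ = 0 := by rw [hs.packingPre0_eq_zero hα hαq (by norm_num) hC hE, mul_zero]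

variable [BorelSpace X]

theorem eventually_div_le_quantizationNumber (hs : IsScaling s) {F : Set X} {a γ ε₀ : ℝ}
    (hγ : 0 < γ) (hγa : γ < a) (hε₀ : 0 < ε₀)
    (hF : ∀ x ∈ F, ∀ ε ∈ Ioc 0 ε₀, μ (ball x ε) ≤ ENNReal.ofReal (s a ε))
    (hF₀ : μ F ≠ 0) (hF_top : μ F ≠ ⊤) :
    ∀ᶠ ε in 𝓝[>] 0, μ F / 2 / ENNReal.ofReal (s γ ε) ≤ quantizationNumber μ ε := by
  have hm : μ F / 2 ≠ ⊤ := ENNReal.div_ne_top hF_top two_ne_zero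
  obtain ⟨K, hK, hKF⟩ : ∃ K : ℝ, 0 < K ∧ ENNReal.ofReal K⁻¹ = μ F / 2 :=
    ⟨_, inv_pos.2 (ENNReal.toReal_pos (by simpa using hF₀) hm),
      by rw [inv_inv, ENNReal.ofReal_toReal hm]⟩
  filter_upwards [hs.eventually_le_comp_mul hγ hγa (by positivity : (0:ℝ) < 2 * K) one_pos,
    (tendsto_const_mul_nhdsGT_zero (by positivity : 0 < 2 * K)).eventually
      (Ioo_mem_nhdsGT (lt_min hε₀ one_pos)), self_mem_nhdsWithin] with ε hsγ hε (hε₀' : 0 < ε)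
  have hsa := hs.pos (hγ.trans hγa) hε.1 (hε.2.trans_le (min_le_right _ _))
  refine le_trans ?_ (div_le_quantizationNumber (by positivity : 0 < K * ε)
    (by simpa using hsa) ENNReal.ofReal_ne_top hF_top
    (fun x hx => by simpa [mul_assoc] using hF x hx _ ⟨hε.1, (hε.2.trans_le (min_le_left _ _)).le⟩)
    (by rw [div_mul_cancel_right₀ hε₀'.ne', hKF]))
  gcongr
  simpa [mul_assoc] using hsγ

theorem tendsto_quantizationNumber_mul_top (hs : IsScaling s) [IsFiniteMeasure μ] {a β : ℝ}
    (hβ : 0 < β) (hβa : β < a)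
    (hA : μ {x | Tendsto (fun ε => μ (ball x ε) / ENNReal.ofReal (s a ε)) (𝓝[>] 0) (𝓝 0)} ≠ 0) :
    Tendsto (fun ε => quantizationNumber μ ε * ENNReal.ofReal (s β ε)) (𝓝[>] 0) (𝓝 ⊤) := by
  obtain ⟨ε₀, hε₀, hF⟩ :
      ∃ ε₀ > 0, μ {x | ∀ ε ∈ Ioc 0 ε₀, μ (ball x ε) ≤ ENNReal.ofReal (s a ε)} ≠ 0 := by
    refine exists_measure_setOf_forall_Ioc_ne_zero fun h0 => hA (measure_mono_null ?_ h0)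
    intro x hx
    filter_upwards [hx.eventually_lt_const one_pos, Ioo_mem_nhdsGT one_pos] with ε hε ⟨hε₀, hε₁⟩
    have hpos : ENNReal.ofReal (s a ε) ≠ 0 := by simpa using hs.pos (hβ.trans hβa) hε₀ hε₁
    simpa using ((ENNReal.div_lt_iff (Or.inl hpos) (Or.inl ENNReal.ofReal_ne_top)).1 hε).le
  set F := {x | ∀ ε ∈ Ioc 0 ε₀, μ (ball x ε) ≤ ENNReal.ofReal (s a ε)}
  obtain ⟨γ, hβγ, hγa⟩ := exists_between hβa
  have hγ : 0 < γ := hβ.trans hβγ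
  have hratio : Tendsto (fun ε => μ F / 2 * ENNReal.ofReal (s β ε / s γ ε)) (𝓝[>] 0) (𝓝 ⊤) := by
    simpa [ENNReal.mul_top (by simpa using hF : μ F / 2 ≠ 0)] using
      ENNReal.Tendsto.const_mul (ENNReal.tendsto_ofReal_atTop.comp (hs.tendsto_div_atTop hβ hβγ))
        (Or.inr (ENNReal.div_ne_top (measure_ne_top μ F) two_ne_zero))
  refine tendsto_nhds_top_mono hratio ?_
  filter_upwards [hs.eventually_div_le_quantizationNumber (F := F) hγ hγa hε₀ (fun x hx => hx) hF
    (measure_ne_top μ F), Ioo_mem_nhdsGT one_pos] with ε hε ⟨hε₀, hε₁⟩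
  calc μ F / 2 * ENNReal.ofReal (s β ε / s γ ε)
      = μ F / 2 / ENNReal.ofReal (s γ ε) * ENNReal.ofReal (s β ε) := by
        rw [ENNReal.ofReal_div_of_pos (hs.pos hγ hε₀ hε₁)]
        simp only [div_eq_mul_inv]
        ring
    _ ≤ quantizationNumber μ ε * ENNReal.ofReal (s β ε) := by gcongr

theorem essSup_lowerLocalScale_le (hs : IsScaling s) (μ : Measure X) [IsFiniteMeasure μ] :
    essSup (lowerLocalScale s μ) μ ≤ lowerQuantScale s μ := by
  by_contra! hlt
  obtain ⟨q, -, hLq, hqE⟩ := ENNReal.lt_iff_exists_real_btwn.1 hlt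
  have hL : lowerQuantScale s μ ≠ ⊤ := hLq.ne_top
  have hLq' := (ENNReal.lt_ofReal_iff_toReal_lt hL).1 hLq
  obtain ⟨β, hLβ, hβq⟩ := exists_between hLq'
  have hβ : 0 < β := ENNReal.toReal_nonneg.trans_lt hLβ
  have hq : 0 < q := hβ.trans hβq
  have hpos : μ {x | ENNReal.ofReal q < lowerLocalScale s μ x} ≠ 0 := by
    intro h0
    refine hqE.not_ge (essSup_le_of_ae_le _ ?_)
    filter_upwards [measure_eq_zero_iff_ae_notMem.1 h0] with x hx using not_lt.1 hx
  have htop := hs.tendsto_quantizationNumber_mul_top hβ hβq fun h0 => hpos <|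
    measure_mono_null (fun _ hx => hs.tendsto_measure_ball_div_of_lt_lowerLocalScale hq hx) h0
  have hβL : ENNReal.ofReal β ≤ lowerQuantScale s μ := le_iSup₂ (f := fun (α : ℝ) (_ : 0 < α ∧
    Tendsto (fun ε => quantizationNumber μ ε * ENNReal.ofReal (s α ε)) (𝓝[>] 0) (𝓝 ⊤)) =>
      ENNReal.ofReal α) β ⟨hβ, htop⟩
  exact hβL.not_gt ((ENNReal.lt_ofReal_iff_toReal_lt hL).2 hLβ)

/-- With `r_k = ρ 2⁻ᵏ`, the error budget `(4 r_k) ^ κ` of `t k` makes the sets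
`{r_k ≤ d(x, t k)}` summable by Markov's inequality, while `s α' (4 r_k) ≤ s α ((4 r_k) ^ κ)`
keeps `t k` small. -/
theorem exists_quantizers (hs : IsScaling s) {α α' : ℝ} (hα : 0 < α) (hαα' : α < α')
    (hQ : ∀ᶠ ε in 𝓝[>] 0, quantizationNumber μ ε * ENNReal.ofReal (s α ε) ≤ 1) :
    ∃ ρ : ℝ, 0 < ρ ∧ ∃ t : ℕ → Finset X,
      ∑' k, μ {x | ENNReal.ofReal (ρ * 2⁻¹ ^ k) ≤ infEDist x (t k)} ≠ ⊤ ∧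
      ∀ k, (t k).card * ENNReal.ofReal (s α' (4 * (ρ * 2⁻¹ ^ k))) ≤ 2 := by
  obtain ⟨κ, hκ, hκev⟩ := hs.exists_eventually_le_comp_rpow hα hαα'
  have hpow := tendsto_rpow_nhdsGT_zero (by linarith : 0 < κ)
  have hev : ∀ᶠ r in 𝓝[>] 0, s α' r ≤ s α (r ^ κ) ∧
      quantizationNumber μ (r ^ κ) * ENNReal.ofReal (s α (r ^ κ)) ≤ 1 ∧
        0 < s α (r ^ κ) ∧ s α (r ^ κ) ≤ 1 := by
    filter_upwards [hκev, hpow.eventually hQ, hpow.eventually (Ioo_mem_nhdsGT one_pos),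
      hpow.eventually ((hs.tendsto_zero hα).eventually_lt_const one_pos)] with r h₁ h₂ h₃ h₄
    exact ⟨h₁, h₂, hs.pos hα h₃.1 h₃.2, h₄.le⟩
  obtain ⟨δ, hδ : 0 < δ, hδsub⟩ := mem_nhdsGT_iff_exists_Ioc_subset.1 hev
  obtain ⟨ρ, hρ, hρδ⟩ : ∃ ρ : ℝ, 0 < ρ ∧ 4 * ρ ≤ δ := ⟨δ / 4, by positivity, by linarith⟩
  have hgood : ∀ k : ℕ, 4 * (ρ * 2⁻¹ ^ k) ∈ Ioc 0 δ := fun k =>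
    ⟨by positivity, le_trans (mul_le_mul_of_nonneg_left (mul_le_of_le_one_right hρ.le
      (pow_le_one₀ (by norm_num) (by norm_num))) (by norm_num)) hρδ⟩
  have hquant : ∀ k : ℕ, ∃ t : Finset X,
      ∫⁻ x, ⨅ c ∈ t, edist x c ∂μ ≤ ENNReal.ofReal ((4 * (ρ * 2⁻¹ ^ k)) ^ κ) ∧
        (t.card : ℝ≥0∞) * ENNReal.ofReal (s α' (4 * (ρ * 2⁻¹ ^ k))) ≤ 2 := by
    intro k
    obtain ⟨hle, hQk, hpos, hone⟩ := hδsub (hgood k)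
    obtain ⟨t, hint, hcard⟩ := exists_lintegral_le_card_mul_le_two (by simpa using hpos)
      (ENNReal.ofReal_le_one.2 hone) hQk
    exact ⟨t, hint, le_trans (by gcongr) hcard⟩
  choose t hint hcard using hquant
  refine ⟨ρ, hρ, t, ne_top_of_le_ne_top ?_ (ENNReal.tsum_le_tsum fun k =>
    measure_le_infEDist_le (by positivity) (hint k)), hcard⟩
  simp_rw [← mul_assoc]
  exact tsum_ofReal_rpow_div_ne_top (by positivity) hρ hκ

variable [TopologicalSpace.SeparableSpace X]

theorem ae_tendsto_measure_ball_div_top (hs : IsScaling s) {α q : ℝ}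
    (hα : 0 < α) (hαq : α < q)
    (hQ : ∀ᶠ ε in 𝓝[>] 0, quantizationNumber μ ε * ENNReal.ofReal (s α ε) ≤ 1) :
    ∀ᵐ x ∂μ, Tendsto (fun ε => μ (ball x ε) / ENNReal.ofReal (s q ε)) (𝓝[>] 0) (𝓝 ⊤) := by
  obtain ⟨α', hαα', hα'q⟩ := exists_between hαq
  obtain ⟨ρ, hρ, t, hsum, hcard⟩ := hs.exists_quantizers hα hαα' hQ
  have hnull : ∀ K M : ℕ, μ ({x | ∀ k ≥ K, infEDist x (t k : Set X) < ENNReal.ofReal (ρ * 2⁻¹ ^ k)}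
      ∩ {x | ∃ᶠ ε in 𝓝[>] 0, μ (ball x ε) ≤ M * ENNReal.ofReal (s q ε)}) = 0 := fun K M =>
    hs.measure_inter_frequently_le_eq_zero μ (hα.trans hαα') hα'q ENNReal.ofNat_ne_top
      (hs.eventually_coveringNumber_mul_le (hα.trans hαα') hρ hcard K) (ENNReal.natCast_ne_top M)
  filter_upwards [ae_eventually_notMem hsum, ae_all_iff.2 fun K => ae_all_iff.2 fun M =>
    measure_eq_zero_iff_ae_notMem.1 (hnull K M)] with x hx hxK
  obtain ⟨K, hK⟩ := eventually_atTop.1 hx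
  refine ENNReal.tendsto_nhds_top_iff_nat.2 fun M => ?_
  have hM := not_frequently.1 fun h => hxK K M ⟨fun k hk => not_le.1 (hK k hk), h⟩
  filter_upwards [hM, Ioo_mem_nhdsGT one_pos] with ε hε ⟨hε₀, hε₁⟩
  rw [ENNReal.lt_div_iff_mul_lt (Or.inl (by simpa using hs.pos (hα.trans hαq) hε₀ hε₁))
    (Or.inl ENNReal.ofReal_ne_top)]
  exact not_le.1 hε

theorem essSup_upperLocalScale_le (hs : IsScaling s) (μ : Measure X) :
    essSup (upperLocalScale s μ) μ ≤ upperQuantScale s μ := by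
  refine le_iInf₂ fun α ⟨hα, hQ⟩ => ENNReal.le_of_forall_pos_le_add fun η hη _ => ?_
  have hq : α < α + η := lt_add_of_pos_right α hη
  rw [← ENNReal.ofReal_coe_nnreal, ← ENNReal.ofReal_add hα.le η.coe_nonneg]
  refine essSup_le_of_ae_le _ ?_
  filter_upwards [hs.ae_tendsto_measure_ball_div_top hα hq (hQ.eventually_le_const zero_lt_one)]
    with x hx
  exact iInf₂_le (α + η) ⟨hα.trans hq, hx⟩

end Measure

end IsScaling

/-- For a finite Borel measure on a separable metric space, the essential suprema of the
local scales are at most the corresponding quantization scales. -/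
theorem essSup_localScale_le_quantScale
    {X : Type*} [MetricSpace X] [TopologicalSpace.SeparableSpace X]
    [MeasurableSpace X] [BorelSpace X]
    (μ : Measure X) [IsFiniteMeasure μ] (s : ℝ → ℝ → ℝ) (hs : IsScaling s) :
    essSup (lowerLocalScale s μ) μ ≤ lowerQuantScale s μ ∧
    essSup (upperLocalScale s μ) μ ≤ upperQuantScale s μ :=
  ⟨hs.essSup_lowerLocalScale_le μ, hs.essSup_upperLocalScale_le μ⟩

end
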